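/- Let A be a Hopf algebra over a field k. If M is an injective left (A ⊗_k A)-module, then M, regarded as a left A-module by restriction of scalars along the coproduct Δ : A → A ⊗ A, is an injective A-module. -/

import Mathlib

/-!
The Galois map `x ⊗ y ↦ (x ⊗ 1) Δ(y)` of a Hopf algebra is bijective, with inverse
`x ⊗ y ↦ (x ⊗ 1) (S ⊗ id) Δ(y)`, and it turns right multiplication by `1 ⊗ a` into right
multiplication by `Δ(a)`. So `A ⊗ A`, as a right `A`-module through `Δ`, is free, and restricting
the coinduced module `Hom_k(A ⊗ A, M)` along `Δ` gives the coinduced module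
`Hom_k(A, Hom_k(A, M))`, which is injective because `k` is a field. An injective `(A ⊗ A)`-module
`M` is a retract of `Hom_k(A ⊗ A, M)`, so its restriction along `Δ` is a retract of an injective
`A`-module.
-/

open TensorProduct CategoryTheory

noncomputable section

universe u v

def Coinduced (k S W : Type*) [CommRing k] [Ring S] [Algebra k S] [AddCommGroup W]
    [Module k W] : Type _ :=
  S →ₗ[k] W

namespace Coinduced

variable {k S W : Type*} [CommRing k] [Ring S] [Algebra k S] [AddCommGroup W] [Module k W]

instance : AddCommGroup (Coinduced k S W) := inferInstanceAs (AddCommGroup (S →ₗ[k] W))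

instance : Module k (Coinduced k S W) := inferInstanceAs (Module k (S →ₗ[k] W))

instance : FunLike (Coinduced k S W) S W := inferInstanceAs (FunLike (S →ₗ[k] W) S W)

instance : LinearMapClass (Coinduced k S W) k S W :=
  inferInstanceAs (LinearMapClass (S →ₗ[k] W) k S W)

variable (k S W) in
def linearEquiv : Coinduced k S W ≃ₗ[k] (S →ₗ[k] W) := LinearEquiv.refl k _

@[simp] lemma linearEquiv_symm_apply (φ : S →ₗ[k] W) (t : S) :
    (linearEquiv k S W).symm φ t = φ t := rfl

@[ext] lemma ext {φ ψ : Coinduced k S W} (h : ∀ t, φ t = ψ t) : φ = ψ := LinearMap.ext h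

@[simp] lemma add_apply (φ ψ : Coinduced k S W) (t : S) : (φ + ψ) t = φ t + ψ t := rfl

@[simp] lemma zero_apply (t : S) : (0 : Coinduced k S W) t = 0 := rfl

@[simp] lemma scalar_smul_apply (c : k) (φ : Coinduced k S W) (t : S) : (c • φ) t = c • φ t := rfl

instance : SMul S (Coinduced k S W) :=
  ⟨fun s φ => (linearEquiv k S W).symm (linearEquiv k S W φ ∘ₗ LinearMap.mulRight k s)⟩

@[simp] lemma smul_apply (s : S) (φ : Coinduced k S W) (t : S) : (s • φ) t = φ (t * s) := rfl

instance : Module S (Coinduced k S W) where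
  one_smul φ := by ext; simp
  mul_smul s s' φ := by ext; simp [mul_assoc]
  smul_zero _ := rfl
  smul_add _ _ _ := rfl
  add_smul s s' φ := by ext; simp [mul_add]
  zero_smul φ := by ext; simp

instance : IsScalarTower k S (Coinduced k S W) where
  smul_assoc c s φ := by ext; simp

section Unit

variable {M : Type*} [AddCommGroup M] [Module S M] [Module k M] [IsScalarTower k S M]

variable (k) in
def unit : M →ₗ[S] Coinduced k S M where
  toFun m := (linearEquiv k S M).symm ((LinearMap.toSpanSingleton S M m).restrictScalars k)
  map_add' m m' := by ext; simp
  map_smul' s m := by ext; simp [mul_smul]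

@[simp] lemma unit_apply (m : M) (t : S) : unit k m t = t • m := rfl

lemma unit_injective : Function.Injective (unit k : M →ₗ[S] Coinduced k S M) :=
  fun m m' h => by simpa using DFunLike.congr_fun h 1

end Unit

instance {k R W : Type*} [Field k] [Ring R] [Algebra k R] [AddCommGroup W] [Module k W] :
    Module.Injective R (Coinduced k R W) := by
  refine Module.Baer.injective fun I g => ?_
  obtain ⟨ρ, hρ⟩ := (I.subtype.restrictScalars k).exists_leftInverse_of_injective
    (LinearMap.ker_eq_bot.2 Subtype.val_injective)
  let ψ : Coinduced k R W := (linearEquiv k R W).symm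
    (LinearMap.applyₗ (1 : R) ∘ₗ (linearEquiv k R W).toLinearMap ∘ₗ g.restrictScalars k ∘ₗ ρ)
  refine ⟨LinearMap.toSpanSingleton R _ ψ, fun r hr => ?_⟩
  ext t
  have hρ' : ρ (t * r) = t • ⟨r, hr⟩ := DFunLike.congr_fun hρ (t • ⟨r, hr⟩)
  calc ψ (t * r) = g (t • ⟨r, hr⟩) 1 := congr(g $hρ' 1)
    _ = g ⟨r, hr⟩ t := by rw [map_smul, smul_apply, one_mul]

end Coinduced

open Coinduced in
theorem injective_restrictScalars_coinduced {k R S V : Type u} {W : Type v} [Field k] [Ring R]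
    [Ring S] [Algebra k R] [Algebra k S] [AddCommGroup V] [Module k V] [AddCommGroup W] [Module k W]
    (φ : R →ₐ[k] S) (γ : V ⊗[k] R ≃ₗ[k] S)
    (hγ : ∀ r t, γ ((LinearMap.mulRight k r).lTensor V t) = γ t * φ r) :
    Injective ((ModuleCat.restrictScalars φ.toRingHom).obj (ModuleCat.of S (Coinduced k S W))) := by
  let := Module.compHom (Coinduced k S W) φ.toRingHom
  let e : Coinduced k S W ≃ₗ[R] Coinduced k R (V →ₗ[k] W) :=
    { (linearEquiv k S W).trans <|
        ((γ.symm.trans (TensorProduct.comm k V R)).arrowCongr (LinearEquiv.refl k W)).trans <|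
          (TensorProduct.lift.equiv (RingHom.id k) R V W).symm.trans (linearEquiv k R _).symm with
      map_smul' := fun r ψ => by
        ext r' v
        show ψ (γ (v ⊗ₜ r') * φ r) = ψ (γ (v ⊗ₜ (r' * r)))
        rw [← hγ, LinearMap.lTensor_tmul, LinearMap.mulRight_apply] }
  exact Injective.of_iso e.toModuleIso.symm (Module.injective_object_of_injective_module R _)

theorem injective_restrictScalars_of_tensorEquiv {k R S V : Type u} [Field k] [Ring R] [Ring S]
    [Algebra k R] [Algebra k S] [AddCommGroup V] [Module k V]
    (φ : R →ₐ[k] S) (γ : V ⊗[k] R ≃ₗ[k] S)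
    (hγ : ∀ r t, γ ((LinearMap.mulRight k r).lTensor V t) = γ t * φ r)
    (M : ModuleCat.{max u v} S) [hM : Injective M] :
    Injective ((ModuleCat.restrictScalars φ.toRingHom).obj M) := by
  let := Module.compHom M (algebraMap k S)
  have : IsScalarTower k S M := ⟨fun c s m => by
    rw [Algebra.smul_def, mul_smul]
    rfl⟩
  let ι := ModuleCat.ofHom (Coinduced.unit k : M →ₗ[S] Coinduced k S M)
  have : Mono ι := (ModuleCat.mono_iff_injective ι).2 Coinduced.unit_injective
  have := injective_restrictScalars_coinduced (W := M) φ γ hγ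
  exact (Retract.map ⟨ι, Injective.factorThru (𝟙 M) ι, by simp⟩
    (ModuleCat.restrictScalars φ.toRingHom)).injective

section ExtendLeft

variable {k A : Type*} [CommSemiring k] [Semiring A] [Algebra k A]

lemma mul'_rTensor_assoc_symm_tmul (x : A) (t : A ⊗[k] A) :
    (LinearMap.mul' k A).rTensor A ((TensorProduct.assoc k A A A).symm (x ⊗ₜ t)) =
      (x ⊗ₜ 1) * t := by
  induction t using TensorProduct.induction_on with
  | zero => simp
  | tmul y z => simp
  | add s t hs ht => simp_all [tmul_add, mul_add]

def extendLeft (f : A →ₗ[k] A ⊗[k] A) : A ⊗[k] A →ₗ[k] A ⊗[k] A :=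
  (LinearMap.mul' k A).rTensor A ∘ₗ (TensorProduct.assoc k A A A).symm.toLinearMap ∘ₗ
    f.lTensor A

@[simp] lemma extendLeft_tmul (f : A →ₗ[k] A ⊗[k] A) (x y : A) :
    extendLeft f (x ⊗ₜ y) = (x ⊗ₜ 1) * f y := by
  simp [extendLeft, mul'_rTensor_assoc_symm_tmul]

lemma extendLeft_tmul_one_mul (f : A →ₗ[k] A ⊗[k] A) (x : A) (t : A ⊗[k] A) :
    extendLeft f ((x ⊗ₜ 1) * t) = (x ⊗ₜ 1) * extendLeft f t := by
  induction t using TensorProduct.induction_on with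
  | zero => simp
  | tmul y z => simp [← mul_assoc]
  | add s t hs ht => simp_all [mul_add]

lemma extendLeft_comp (f g : A →ₗ[k] A ⊗[k] A) :
    extendLeft f ∘ₗ extendLeft g = extendLeft (extendLeft f ∘ₗ g) := by
  ext x y
  simp [extendLeft_tmul_one_mul]

@[simp] lemma extendLeft_mk_one : extendLeft (TensorProduct.mk k A A 1) = LinearMap.id := by
  ext x y
  simp

end ExtendLeft

section GaloisMap

open Coalgebra HopfAlgebra

variable {k A : Type*} [CommSemiring k] [Semiring A] [HopfAlgebra k A]

lemma extendLeft_comul_comp_antipode_rTensor_comul :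
    extendLeft comul ∘ₗ (antipode k).rTensor A ∘ₗ comul = TensorProduct.mk k A A 1 := by
  simp only [extendLeft, coassoc_simps]
  rw [← LinearMap.rTensor_def A (antipode k), mul_antipode_rTensor_comul,
    ← LinearMap.rTensor_def, LinearMap.rTensor_comp, LinearMap.comp_assoc,
    rTensor_counit_comp_comul]
  ext; simp

lemma extendLeft_antipode_rTensor_comul_comp_comul :
    extendLeft ((antipode k).rTensor A ∘ₗ comul) ∘ₗ comul = TensorProduct.mk k A A 1 := by
  simp only [extendLeft, coassoc_simps]
  rw [← LinearMap.lTensor_def, mul_antipode_lTensor_comul, ← LinearMap.rTensor_def,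
    LinearMap.rTensor_comp, LinearMap.comp_assoc, rTensor_counit_comp_comul]
  ext; simp

variable (k A) in
def galoisEquiv : A ⊗[k] A ≃ₗ[k] A ⊗[k] A :=
  LinearEquiv.ofLinearMap (extendLeft comul) (extendLeft ((antipode k).rTensor A ∘ₗ comul))
    (by rw [extendLeft_comp, extendLeft_comul_comp_antipode_rTensor_comul, extendLeft_mk_one])
    (by rw [extendLeft_comp, extendLeft_antipode_rTensor_comul_comp_comul, extendLeft_mk_one])

lemma galoisEquiv_lTensor_mulRight (a : A) (t : A ⊗[k] A) :
    galoisEquiv k A ((LinearMap.mulRight k a).lTensor A t) =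
      galoisEquiv k A t * Bialgebra.comulAlgHom k A a := by
  induction t using TensorProduct.induction_on with
  | zero => simp
  | tmul x y => simp [galoisEquiv, mul_assoc]
  | add s t hs ht => simp_all [add_mul]

end GaloisMap

variable (k A : Type) [Field k] [Ring A] [HopfAlgebra k A]

theorem restrict_comul_injective (M : ModuleCat (A ⊗[k] A)) (hM : Injective M) :
    Injective ((ModuleCat.restrictScalars
      (Bialgebra.comulAlgHom k A).toRingHom).obj M) :=
  injective_restrictScalars_of_tensorEquiv (Bialgebra.comulAlgHom k A) (galoisEquiv k A)
    galoisEquiv_lTensor_mulRight M (hM := hM)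

end
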